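/- The six-dimensional subspace T := span_ℂ{E₁, E₂, E_{α₁+α₂}, F_{α₁}, F_{α₂}, F_{α₁+α₂}} of U_q(sl₃) (the *-extension of T^{(0,1)}) satisfies: Δ(X) ∈ (T ⊕ ℂ1) ⊗ U_q(sl₃) for every X ∈ T; K_i T K_i⁻¹ = T for i = 1, 2; and T* = T. In other words, T is a *-invariant quantum tangent space. -/

import Mathlib

/-!
Both root vectors are `q`-commutators `x y - q⁻¹ y x` of skew-primitive elements
(`Δ x = x ⊗ k + 1 ⊗ x`): `E_{α₁+α₂}` of `E₂, E₁`, and, after commuting the `K`'s to the left,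
`F_{α₁+α₂}` of `F_{α₁}, F_{α₂}`. The coproduct of such a commutator has left legs `x`, `y`, the
commutator itself and `1`, which gives the coideal property. Every generator of `T` is a weight
vector for each `K_i`, with a power of `q` as weight, so conjugation by `K_i` rescales the spanning
set. Finally `*` swaps `E_i` and `F_{αᵢ}` and, being antimultiplicative and fixing `q⁻¹`, swaps the
two `q`-commutators, so it permutes the spanning set.
-/

noncomputable section

open scoped TensorProduct

namespace QuantumSL3

/-- Generators of `U_q(sl₃)`: `E i`, `F i`, `K i`, `Kinv i` for `i : Fin 2`. -/
inductive UGen : Type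
  | E : Fin 2 → UGen
  | F : Fin 2 → UGen
  | K : Fin 2 → UGen
  | Kinv : Fin 2 → UGen

/-- The Cartan matrix of `sl₃`. -/
def cartan (i j : Fin 2) : ℤ := if i = j then 2 else -1

/-- The generators viewed inside the free algebra. -/
def ug (x : UGen) : FreeAlgebra ℂ UGen := FreeAlgebra.ι ℂ x

/-- The defining relations of `U_q(sl₃)`. -/
inductive urel (q : ℝ) : FreeAlgebra ℂ UGen → FreeAlgebra ℂ UGen → Prop
  | KKinv (i : Fin 2) : urel q (ug (.K i) * ug (.Kinv i)) 1
  | KinvK (i : Fin 2) : urel q (ug (.Kinv i) * ug (.K i)) 1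
  | KK (i j : Fin 2) : urel q (ug (.K i) * ug (.K j)) (ug (.K j) * ug (.K i))
  | KEK (i j : Fin 2) :
      urel q (ug (.K i) * ug (.E j) * ug (.Kinv i)) (((q : ℂ) ^ cartan i j) • ug (.E j))
  | KFK (i j : Fin 2) :
      urel q (ug (.K i) * ug (.F j) * ug (.Kinv i)) (((q : ℂ) ^ (-cartan i j)) • ug (.F j))
  | EF (i : Fin 2) :
      urel q (ug (.E i) * ug (.F i) - ug (.F i) * ug (.E i))
        ((((q : ℂ) - (q : ℂ)⁻¹)⁻¹) • (ug (.K i) - ug (.Kinv i)))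
  | EFne (i j : Fin 2) (h : i ≠ j) :
      urel q (ug (.E i) * ug (.F j)) (ug (.F j) * ug (.E i))
  | serreE (i j : Fin 2) (h : i ≠ j) :
      urel q (ug (.E i) ^ 2 * ug (.E j)
          - ((q : ℂ) + (q : ℂ)⁻¹) • (ug (.E i) * ug (.E j) * ug (.E i))
          + ug (.E j) * ug (.E i) ^ 2) 0
  | serreF (i j : Fin 2) (h : i ≠ j) :
      urel q (ug (.F i) ^ 2 * ug (.F j)
          - ((q : ℂ) + (q : ℂ)⁻¹) • (ug (.F i) * ug (.F j) * ug (.F i))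
          + ug (.F j) * ug (.F i) ^ 2) 0

/-- The Drinfeld–Jimbo quantised enveloping algebra `U_q(sl₃)`. -/
abbrev Uq (q : ℝ) := RingQuot (urel q)

/-- The generator `E_{i+1}` of `U_q(sl₃)` (so `E q 0 = E₁`, `E q 1 = E₂`). -/
def E (q : ℝ) (i : Fin 2) : Uq q := RingQuot.mkAlgHom ℂ (urel q) (ug (.E i))

def F (q : ℝ) (i : Fin 2) : Uq q := RingQuot.mkAlgHom ℂ (urel q) (ug (.F i))

def K (q : ℝ) (i : Fin 2) : Uq q := RingQuot.mkAlgHom ℂ (urel q) (ug (.K i))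

def Kinv (q : ℝ) (i : Fin 2) : Uq q := RingQuot.mkAlgHom ℂ (urel q) (ug (.Kinv i))

/-- The quantum root vector `E_{α₁+α₂} = E₂E₁ − q⁻¹E₁E₂`. -/
def Eab (q : ℝ) : Uq q := E q 1 * E q 0 - (q : ℂ)⁻¹ • (E q 0 * E q 1)

end QuantumSL3

namespace QuantumSL3

/-- `F_{α₁} = K₁F₁`. -/
def Fa1 (q : ℝ) : Uq q := K q 0 * F q 0

/-- `F_{α₂} = K₂F₂`. -/
def Fa2 (q : ℝ) : Uq q := K q 1 * F q 1

/-- `F_{α₁+α₂} = q⁻¹K₁K₂(F₁F₂ − q⁻¹F₂F₁)`. -/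
def Fab (q : ℝ) : Uq q :=
  (q : ℂ)⁻¹ • (K q 0 * K q 1 * (F q 0 * F q 1 - (q : ℂ)⁻¹ • (F q 1 * F q 0)))

/-- The `*`-extension `T = span{E₁, E₂, E_{α₁+α₂}, F_{α₁}, F_{α₂}, F_{α₁+α₂}}`. -/
def Tfull (q : ℝ) : Submodule ℂ (Uq q) :=
  Submodule.span ℂ {E q 0, E q 1, Eab q, Fa1 q, Fa2 q, Fab q}

end QuantumSL3

open TensorProduct

section QCommutator

variable {R A : Type*} [CommRing R] [Ring A] [Algebra R A]

def qCommutator (c : R) (x y : A) : A := x * y - c • (y * x)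

def IsWeightVector (k : A) (c : R) (x : A) : Prop := k * x = c • (x * k)

theorem IsWeightVector.mul {k x y : A} {c d : R} (hx : IsWeightVector k c x)
    (hy : IsWeightVector k d y) : IsWeightVector k (c * d) (x * y) := by
  unfold IsWeightVector at *
  rw [← mul_assoc, hx, smul_mul_assoc, mul_assoc, hy, mul_smul_comm, smul_smul, mul_assoc]

theorem IsWeightVector.qCommutator {k x y : A} {c d : R} (r : R) (hx : IsWeightVector k c x)
    (hy : IsWeightVector k d y) : IsWeightVector k (c * d) (qCommutator r x y) := by
  have hxy := hx.mul hy
  have hyx := hy.mul hx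
  unfold IsWeightVector at *
  rw [_root_.qCommutator, mul_sub, sub_mul, mul_smul_comm r k (y * x), hxy, hyx, smul_mul_assoc,
    mul_comm d c, smul_sub, smul_comm r (c * d)]

theorem IsWeightVector.mul_mul_eq_smul {k k' x : A} {c : R} (hx : IsWeightVector k c x)
    (hk : k * k' = 1) : k * (x * k') = c • x := by
  rw [← mul_assoc, hx, smul_mul_assoc, mul_assoc, hk, mul_one]

def IsSkewPrimitive (Δ : A →ₐ[R] A ⊗[R] A) (k x : A) : Prop := Δ x = x ⊗ₜ k + 1 ⊗ₜ x

theorem map_qCommutator_of_map_mul_rev {σ : R →+* R} (f : A →ₛₗ[σ] A)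
    (hf : ∀ x y, f (x * y) = f y * f x) (c : R) (x y : A) :
    f (qCommutator c x y) = qCommutator (σ c) (f y) (f x) := by
  rw [qCommutator, qCommutator, map_sub, map_smulₛₗ, hf, hf]

variable {Δ : A →ₐ[R] A ⊗[R] A} {V : Submodule R A}

theorem IsSkewPrimitive.map_qCommutator {k l x y : A} (c : R) (hx : IsSkewPrimitive Δ k x)
    (hy : IsSkewPrimitive Δ l y) (hkl : Commute k l) :
    Δ (qCommutator c x y) = qCommutator c x y ⊗ₜ (k * l) + x ⊗ₜ qCommutator c k y
      + y ⊗ₜ qCommutator c x l + 1 ⊗ₜ qCommutator c x y := by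
  unfold IsSkewPrimitive at hx hy
  simp only [qCommutator, map_sub, map_smul, map_mul, hx, hy, add_mul, mul_add,
    Algebra.TensorProduct.tmul_mul_tmul, one_mul, mul_one, hkl.eq, tmul_sub, sub_tmul,
    tmul_smul, smul_tmul']
  abel

theorem tmul_mem_map₂_mk {a : A} (ha : a ∈ V) (b : A) :
    a ⊗ₜ[R] b ∈ V.map₂ (TensorProduct.mk R A A) ⊤ :=
  Submodule.apply_mem_map₂ _ ha Submodule.mem_top

theorem IsSkewPrimitive.map_mem_map₂_mk {k x : A} (hx : IsSkewPrimitive Δ k x) (h1 : 1 ∈ V)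
    (hxV : x ∈ V) : Δ x ∈ V.map₂ (TensorProduct.mk R A A) ⊤ := by
  rw [hx]
  exact add_mem (tmul_mem_map₂_mk hxV _) (tmul_mem_map₂_mk h1 _)

theorem IsSkewPrimitive.map_qCommutator_mem_map₂_mk {k l x y : A} {c : R}
    (hx : IsSkewPrimitive Δ k x) (hy : IsSkewPrimitive Δ l y) (hkl : Commute k l)
    (h1 : 1 ∈ V) (hxV : x ∈ V) (hyV : y ∈ V) (hxyV : qCommutator c x y ∈ V) :
    Δ (qCommutator c x y) ∈ V.map₂ (TensorProduct.mk R A A) ⊤ := by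
  rw [hx.map_qCommutator c hy hkl]
  exact add_mem (add_mem (add_mem (tmul_mem_map₂_mk hxyV _) (tmul_mem_map₂_mk hxV _))
    (tmul_mem_map₂_mk hyV _)) (tmul_mem_map₂_mk h1 _)

end QCommutator

theorem Submodule.map_span_eq_of_forall_eq_smul {K V : Type*} [Field K] [AddCommGroup V]
    [Module K V] (f : V →ₗ[K] V) (s : Set V) (hs : ∀ x ∈ s, ∃ c : K, c ≠ 0 ∧ f x = c • x) :
    (span K s).map f = span K s := by
  rw [map_span]
  refine le_antisymm (span_le.2 ?_) (span_le.2 fun x hx => ?_)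
  · rintro _ ⟨x, hx, rfl⟩
    obtain ⟨c, -, hc⟩ := hs x hx
    exact hc ▸ smul_mem _ c (subset_span hx)
  · obtain ⟨c, hc0, hc⟩ := hs x hx
    have : x = c⁻¹ • f x := by rw [hc, inv_smul_smul₀ hc0]
    exact this ▸ smul_mem _ _ (subset_span ⟨x, hx, rfl⟩)

namespace QuantumSL3

variable {q : ℝ}

theorem K_mul_Kinv (i : Fin 2) : K q i * Kinv q i = 1 := by
  simpa [K, Kinv] using RingQuot.mkAlgHom_rel ℂ (urel.KKinv (q := q) i)

theorem Kinv_mul_K (i : Fin 2) : Kinv q i * K q i = 1 := by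
  simpa [K, Kinv] using RingQuot.mkAlgHom_rel ℂ (urel.KinvK (q := q) i)

theorem commute_K (i j : Fin 2) : Commute (K q i) (K q j) := by
  simpa [K, commute_iff_eq] using RingQuot.mkAlgHom_rel ℂ (urel.KK (q := q) i j)

theorem isWeightVector_of_mul_mul_Kinv {i : Fin 2} {x : Uq q} {c : ℂ}
    (h : K q i * x * Kinv q i = c • x) : IsWeightVector (K q i) c x := by
  rw [IsWeightVector, ← smul_mul_assoc, ← h, mul_assoc _ (Kinv q i), Kinv_mul_K, mul_one]

theorem isWeightVector_E (i j : Fin 2) : IsWeightVector (K q i) ((q : ℂ) ^ cartan i j) (E q j) :=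
  isWeightVector_of_mul_mul_Kinv <| by
    simpa [K, E, Kinv] using RingQuot.mkAlgHom_rel ℂ (urel.KEK (q := q) i j)

theorem isWeightVector_F (i j : Fin 2) :
    IsWeightVector (K q i) ((q : ℂ) ^ (-cartan i j)) (F q j) :=
  isWeightVector_of_mul_mul_Kinv <| by
    simpa [K, F, Kinv] using RingQuot.mkAlgHom_rel ℂ (urel.KFK (q := q) i j)

theorem isWeightVector_K (i j : Fin 2) : IsWeightVector (K q i) (1 : ℂ) (K q j) := by
  rw [IsWeightVector, one_smul, (commute_K i j).eq]

theorem F_mul_K_of_ne (hq : q ≠ 0) {i j : Fin 2} (hij : i ≠ j) :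
    F q i * K q j = (q : ℂ)⁻¹ • (K q j * F q i) := by
  have h := isWeightVector_F (q := q) j i
  simp only [IsWeightVector, cartan, if_neg hij.symm, neg_neg, zpow_one] at h
  rw [h, inv_smul_smul₀ (Complex.ofReal_ne_zero.2 hq)]

theorem Fa1_mul_Fa2 (hq : q ≠ 0) :
    Fa1 q * Fa2 q = (q : ℂ)⁻¹ • (K q 0 * K q 1 * (F q 0 * F q 1)) := by
  rw [Fa1, Fa2, mul_assoc, ← mul_assoc (F q 0), F_mul_K_of_ne hq (by decide), smul_mul_assoc,
    mul_smul_comm]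
  simp only [mul_assoc]

theorem Fa2_mul_Fa1 (hq : q ≠ 0) :
    Fa2 q * Fa1 q = (q : ℂ)⁻¹ • (K q 0 * K q 1 * (F q 1 * F q 0)) := by
  rw [Fa1, Fa2, mul_assoc, ← mul_assoc (F q 1), F_mul_K_of_ne hq (by decide), smul_mul_assoc,
    mul_smul_comm]
  simp only [mul_assoc]
  rw [← mul_assoc (K q 1), (commute_K 1 0).eq, mul_assoc]

theorem Eab_eq_qCommutator : Eab q = qCommutator (q : ℂ)⁻¹ (E q 1) (E q 0) := rfl

theorem Fab_eq_qCommutator (hq : q ≠ 0) : Fab q = qCommutator (q : ℂ)⁻¹ (Fa1 q) (Fa2 q) := by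
  rw [qCommutator, Fa1_mul_Fa2 hq, Fa2_mul_Fa1 hq, Fab, mul_sub, smul_sub, mul_smul_comm]

theorem generators_subset_Tfull :
    ({E q 0, E q 1, Eab q, Fa1 q, Fa2 q, Fab q} : Set (Uq q)) ⊆ Tfull q :=
  Submodule.subset_span

theorem isSkewPrimitive_K_mul_F {Δ : Uq q →ₐ[ℂ] Uq q ⊗[ℂ] Uq q}
    (hΔF : ∀ i, Δ (F q i) = F q i ⊗ₜ[ℂ] 1 + Kinv q i ⊗ₜ[ℂ] F q i)
    (hΔK : ∀ i, Δ (K q i) = K q i ⊗ₜ[ℂ] K q i) (i : Fin 2) :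
    IsSkewPrimitive Δ (K q i) (K q i * F q i) := by
  rw [IsSkewPrimitive, map_mul, hΔK, hΔF, mul_add, Algebra.TensorProduct.tmul_mul_tmul,
    Algebra.TensorProduct.tmul_mul_tmul, mul_one, K_mul_Kinv]

theorem comul_mem_of_mem_Tfull (hq : q ≠ 0) {Δ : Uq q →ₐ[ℂ] Uq q ⊗[ℂ] Uq q}
    (hΔE : ∀ i, Δ (E q i) = E q i ⊗ₜ[ℂ] K q i + 1 ⊗ₜ[ℂ] E q i)
    (hΔF : ∀ i, Δ (F q i) = F q i ⊗ₜ[ℂ] 1 + Kinv q i ⊗ₜ[ℂ] F q i)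
    (hΔK : ∀ i, Δ (K q i) = K q i ⊗ₜ[ℂ] K q i) {X : Uq q} (hX : X ∈ Tfull q) :
    Δ X ∈ (Tfull q ⊔ Submodule.span ℂ {1}).map₂ (TensorProduct.mk ℂ (Uq q) (Uq q)) ⊤ := by
  set V := Tfull q ⊔ Submodule.span ℂ {1}
  have hT : ∀ {x}, x ∈ ({E q 0, E q 1, Eab q, Fa1 q, Fa2 q, Fab q} : Set (Uq q)) → x ∈ V :=
    fun hx => Submodule.mem_sup_left (generators_subset_Tfull hx)
  have h1 : (1 : Uq q) ∈ V := Submodule.mem_sup_right (Submodule.mem_span_singleton_self 1)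
  have hE : ∀ i, IsSkewPrimitive Δ (K q i) (E q i) := hΔE
  have hFa := isSkewPrimitive_K_mul_F hΔF hΔK
  suffices Tfull q ≤ (V.map₂ (TensorProduct.mk ℂ (Uq q) (Uq q)) ⊤).comap Δ.toLinearMap from this hX
  refine Submodule.span_le.2 ?_
  rintro _ (rfl | rfl | rfl | rfl | rfl | rfl)
  · exact (hE 0).map_mem_map₂_mk h1 (hT (by simp))
  · exact (hE 1).map_mem_map₂_mk h1 (hT (by simp))
  · exact (hE 1).map_qCommutator_mem_map₂_mk (hE 0) (commute_K 1 0) h1 (hT (by simp))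
      (hT (by simp)) (hT (by simp [Eab_eq_qCommutator]))
  · exact (hFa 0).map_mem_map₂_mk h1 (hT (by simp [Fa1]))
  · exact (hFa 1).map_mem_map₂_mk h1 (hT (by simp [Fa2]))
  · show Δ (Fab q) ∈ V.map₂ (TensorProduct.mk ℂ (Uq q) (Uq q)) ⊤
    rw [Fab_eq_qCommutator hq]
    exact (hFa 0).map_qCommutator_mem_map₂_mk (hFa 1) (commute_K 0 1) h1 (hT (by simp [Fa1]))
      (hT (by simp [Fa2])) (hT (by simp [Fab_eq_qCommutator hq, Fa1, Fa2]))

theorem map_conj_K_Tfull (hq : q ≠ 0) (i : Fin 2) :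
    (Tfull q).map (LinearMap.mulLeft ℂ (K q i) ∘ₗ LinearMap.mulRight ℂ (Kinv q i)) = Tfull q := by
  have hqpow : ∀ n : ℤ, (q : ℂ) ^ n ≠ 0 := fun n => zpow_ne_zero n (Complex.ofReal_ne_zero.2 hq)
  have eigen : ∀ {x : Uq q} {c : ℂ}, IsWeightVector (K q i) c x → c ≠ 0 →
      ∃ c : ℂ, c ≠ 0 ∧ (LinearMap.mulLeft ℂ (K q i) ∘ₗ LinearMap.mulRight ℂ (Kinv q i)) x = c • x :=
    fun hx hc => ⟨_, hc, hx.mul_mul_eq_smul (K_mul_Kinv i)⟩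
  have hFa : ∀ j, IsWeightVector (K q i) _ (K q j * F q j) :=
    fun j => (isWeightVector_K i j).mul (isWeightVector_F i j)
  refine Submodule.map_span_eq_of_forall_eq_smul _ _ ?_
  rintro _ (rfl | rfl | rfl | rfl | rfl | rfl)
  · exact eigen (isWeightVector_E i 0) (by simp [hqpow])
  · exact eigen (isWeightVector_E i 1) (by simp [hqpow])
  · exact eigen ((isWeightVector_E i 1).qCommutator _ (isWeightVector_E i 0)) (by simp [hqpow])
  · exact eigen (hFa 0) (by simp [hqpow])
  · exact eigen (hFa 1) (by simp [hqpow])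
  · rw [Fab_eq_qCommutator hq]
    exact eigen ((hFa 0).qCommutator _ (hFa 1)) (by simp [hqpow])

theorem image_star_Tfull (hq : q ≠ 0) (st : Uq q → Uq q)
    (hadd : ∀ x y, st (x + y) = st x + st y)
    (hsmul : ∀ (c : ℂ) (x), st (c • x) = (starRingEnd ℂ c) • st x)
    (hmul : ∀ x y, st (x * y) = st y * st x) (hinvol : ∀ x, st (st x) = x)
    (hstE : ∀ i, st (E q i) = K q i * F q i) :
    st '' (Tfull q : Set (Uq q)) = Tfull q := by
  let stL : Uq q →ₛₗ[starRingEnd ℂ] Uq q := ⟨⟨st, hadd⟩, hsmul⟩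
  have hEab : st (Eab q) = Fab q := by
    rw [Eab_eq_qCommutator, Fab_eq_qCommutator hq]
    refine (map_qCommutator_of_map_mul_rev stL hmul _ _ _).trans ?_
    rw [map_inv₀, Complex.conj_ofReal]
    exact congrArg₂ _ (hstE 0) (hstE 1)
  have hE0 : st (E q 0) = Fa1 q := hstE 0
  have hE1 : st (E q 1) = Fa2 q := hstE 1
  have hFa1 : st (Fa1 q) = E q 0 := by rw [← hE0, hinvol]
  have hFa2 : st (Fa2 q) = E q 1 := by rw [← hE1, hinvol]
  have hFab : st (Fab q) = Eab q := by rw [← hEab, hinvol]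
  have hgens : stL '' {E q 0, E q 1, Eab q, Fa1 q, Fa2 q, Fab q} =
      {E q 0, E q 1, Eab q, Fa1 q, Fa2 q, Fab q} := by
    ext
    simp only [Set.image_insert_eq, Set.image_singleton, stL, LinearMap.coe_mk, AddHom.coe_mk,
      hE0, hE1, hEab, hFa1, hFa2, hFab, Set.mem_insert_iff, Set.mem_singleton_iff]
    tauto
  change stL '' _ = _
  rw [← Submodule.map_coe, Tfull, Submodule.map_span, hgens]

theorem Tfull_is_star_quantum_tangent_space_general (q : ℝ) (hq0 : 0 < q)
    (Δ : Uq q →ₐ[ℂ] Uq q ⊗[ℂ] Uq q)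
    (hΔE : ∀ i, Δ (E q i) = E q i ⊗ₜ[ℂ] K q i + 1 ⊗ₜ[ℂ] E q i)
    (hΔF : ∀ i, Δ (F q i) = F q i ⊗ₜ[ℂ] 1 + Kinv q i ⊗ₜ[ℂ] F q i)
    (hΔK : ∀ i, Δ (K q i) = K q i ⊗ₜ[ℂ] K q i)
    (st : Uq q → Uq q)
    (hadd : ∀ x y, st (x + y) = st x + st y)
    (hsmul : ∀ (c : ℂ) (x), st (c • x) = (starRingEnd ℂ c) • st x)
    (hmul : ∀ x y, st (x * y) = st y * st x)
    (hinvol : ∀ x, st (st x) = x)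
    (hstE : ∀ i, st (E q i) = K q i * F q i) :
    (∀ X ∈ Tfull q, Δ X ∈ Submodule.map₂ (TensorProduct.mk ℂ (Uq q) (Uq q))
        (Tfull q ⊔ Submodule.span ℂ {(1 : Uq q)}) (⊤ : Submodule ℂ (Uq q)))
    ∧ (∀ i : Fin 2,
        Submodule.map (LinearMap.mulLeft ℂ (K q i) ∘ₗ LinearMap.mulRight ℂ (Kinv q i))
          (Tfull q) = Tfull q)
    ∧ st '' (Tfull q : Set (Uq q)) = (Tfull q : Set (Uq q)) :=
  ⟨fun _ hX => comul_mem_of_mem_Tfull hq0.ne' hΔE hΔF hΔK hX, map_conj_K_Tfull hq0.ne',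
    image_star_Tfull hq0.ne' st hadd hsmul hmul hinvol hstE⟩

theorem Tfull_is_star_quantum_tangent_space (q : ℝ) (hq0 : 0 < q) (hq1 : q < 1)
    (Δ : Uq q →ₐ[ℂ] Uq q ⊗[ℂ] Uq q)
    (hΔE : ∀ i, Δ (E q i) = E q i ⊗ₜ[ℂ] K q i + 1 ⊗ₜ[ℂ] E q i)
    (hΔF : ∀ i, Δ (F q i) = F q i ⊗ₜ[ℂ] 1 + Kinv q i ⊗ₜ[ℂ] F q i)
    (hΔK : ∀ i, Δ (K q i) = K q i ⊗ₜ[ℂ] K q i)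
    (hΔKinv : ∀ i, Δ (Kinv q i) = Kinv q i ⊗ₜ[ℂ] Kinv q i)
    (st : Uq q → Uq q)
    (hadd : ∀ x y, st (x + y) = st x + st y)
    (hsmul : ∀ (c : ℂ) (x), st (c • x) = (starRingEnd ℂ c) • st x)
    (hmul : ∀ x y, st (x * y) = st y * st x)
    (hone : st 1 = 1)
    (hinvol : ∀ x, st (st x) = x)
    (hstE : ∀ i, st (E q i) = K q i * F q i)
    (hstF : ∀ i, st (F q i) = E q i * Kinv q i)
    (hstK : ∀ i, st (K q i) = K q i)
    (hstKinv : ∀ i, st (Kinv q i) = Kinv q i) :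
    (∀ X ∈ Tfull q, Δ X ∈ Submodule.map₂ (TensorProduct.mk ℂ (Uq q) (Uq q))
        (Tfull q ⊔ Submodule.span ℂ {(1 : Uq q)}) (⊤ : Submodule ℂ (Uq q)))
    ∧ (∀ i : Fin 2,
        Submodule.map (LinearMap.mulLeft ℂ (K q i) ∘ₗ LinearMap.mulRight ℂ (Kinv q i))
          (Tfull q) = Tfull q)
    ∧ st '' (Tfull q : Set (Uq q)) = (Tfull q : Set (Uq q)) :=
  Tfull_is_star_quantum_tangent_space_general q hq0 Δ hΔE hΔF hΔK st hadd hsmul hmul hinvol hstE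

end QuantumSL3
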